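/- The vector v has pseudo-norm -1 with respect to η: one has -(v 0)*conj(v 0) + (v 1)*conj(v 1) + (v 2)*conj(v 2) = -1, i.e. the sum over a of (η a a)*(v a)*conj(v a) equals -1. -/

import Mathlib

/-! Since `|ℰ + 1|² - |ℰ - 1|² = 4 Re ℰ`, the η-norm of `v` is `(Re ℰ + |Λ|²) / X`,
and `Re ℰ = -X - |Λ|²`. -/

open Complex ComplexConjugate Matrix

/-- The `SU(2,1)` metric `η = diag(-1, 1, 1)`. -/
noncomputable def etaM : Matrix (Fin 3) (Fin 3) ℂ :=
  Matrix.diagonal ![-1, 1, 1]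

/-- The vector `v` built from the Ernst potential `ℰ = -X - Λ conj(Λ) + i Y`
and the electromagnetic potential `Λ`:
`v = (2√X)⁻¹ (ℰ - 1, 2Λ, ℰ + 1)`. -/
noncomputable def vE (X Y : ℝ) (Λ : ℂ) : Fin 3 → ℂ :=
  let ℰ : ℂ := -(X : ℂ) - Λ * conj Λ + Complex.I * Y
  ![(ℰ - 1) / (2 * Real.sqrt X), Λ / Real.sqrt X, (ℰ + 1) / (2 * Real.sqrt X)]

/-- The hermitian matrix `Φ` of the Mazur construction:
`Φ_{ab} = η_{ab} + 2 conj(v_a) v_b`. -/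
noncomputable def PhiM (X Y : ℝ) (Λ : ℂ) : Matrix (Fin 3) (Fin 3) ℂ :=
  Matrix.of fun a b => etaM a b + 2 * conj (vE X Y Λ a) * vE X Y Λ b

theorem sum_etaM_mul_conj (w : Fin 3 → ℂ) :
    ∑ a : Fin 3, etaM a a * w a * conj (w a) =
      -(w 0 * conj (w 0)) + w 1 * conj (w 1) + w 2 * conj (w 2) := by
  simp [Fin.sum_univ_three, etaM]

theorem Complex.normSq_add_one_sub_normSq_sub_one (z : ℂ) :
    normSq (z + 1) - normSq (z - 1) = 4 * z.re := by
  simp only [normSq_add, normSq_sub, map_one, mul_one]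
  ring

theorem pseudoNorm_ernstVector_eq (E Λ : ℂ) (r : ℝ) :
    -((E - 1) / (2 * r) * conj ((E - 1) / (2 * r))) + Λ / r * conj (Λ / r)
        + (E + 1) / (2 * r) * conj ((E + 1) / (2 * r)) =
      ((E.re + normSq Λ) / r ^ 2 : ℝ) := by
  have hpolar := congrArg ((↑) : ℝ → ℂ) E.normSq_add_one_sub_normSq_sub_one
  have htwo : normSq 2 = 4 := by norm_num [normSq_apply]
  simp only [mul_conj, normSq_div, normSq_mul, normSq_ofReal, htwo]
  push_cast at hpolar ⊢
  linear_combination hpolar / (4 * (r : ℂ) ^ 2)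

/-- The vector `v` has pseudo-norm `-1` with respect to `η`:
`-(v 0) conj(v 0) + (v 1) conj(v 1) + (v 2) conj(v 2) = -1`,
i.e. `∑ a, η a a * v a * conj (v a) = -1`. -/
theorem vE_pseudo_norm (X Y : ℝ) (hX : 0 < X) (Λ : ℂ) :
    -(vE X Y Λ 0 * conj (vE X Y Λ 0)) + vE X Y Λ 1 * conj (vE X Y Λ 1)
        + vE X Y Λ 2 * conj (vE X Y Λ 2) = -1 ∧
      ∑ a : Fin 3, etaM a a * vE X Y Λ a * conj (vE X Y Λ a) = -1 := by
  have hnorm : -(vE X Y Λ 0 * conj (vE X Y Λ 0)) + vE X Y Λ 1 * conj (vE X Y Λ 1)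
      + vE X Y Λ 2 * conj (vE X Y Λ 2) = -1 := by
    have hre : (-(X : ℂ) - Λ * conj Λ + I * Y).re = -X - normSq Λ := by simp [mul_conj]
    simp only [vE, cons_val_zero, cons_val_one, cons_val_two, head_cons, tail_cons]
    rw [pseudoNorm_ernstVector_eq, hre, Real.sq_sqrt hX.le, sub_add_cancel, neg_div,
      div_self hX.ne', ofReal_neg, ofReal_one]
  exact ⟨hnorm, (sum_etaM_mul_conj _).trans hnorm⟩
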